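/- Watrous SDP characterization of fidelity: For density operators ρ, ρ' on a finite-dimensional Hilbert space H, the square root of the fidelity √F(ρ,ρ') equals the supremum of (1/2)(Tr X + Tr X†) over all operators X ∈ L(H) such that the block operator [[ρ', X],[X†, ρ]] is positive semidefinite. -/

import Mathlib

open Matrix ComplexOrder
set_option linter.unusedSectionVars false
set_option maxHeartbeats 1000000

variable {n : Type*} [Fintype n] [DecidableEq n]

/-- The square root of a positive semidefinite matrix, as `Matrix.PosSemidef.sqrt` was defined. -/
noncomputable def posSemidefSqrt {A : Matrix n n ℂ} (hA : A.PosSemidef) : Matrix n n ℂ :=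
  (hA.1.eigenvectorUnitary : Matrix n n ℂ) * diagonal ((↑) ∘ (√·) ∘ hA.1.eigenvalues) *
    (star hA.1.eigenvectorUnitary : Matrix n n ℂ)

/-- The trace norm `‖M‖₁ = Tr √(Mᴴ M)` of a matrix. -/
noncomputable def traceNorm (M : Matrix n n ℂ) : ℝ :=
  ((posSemidefSqrt (Matrix.posSemidef_conjTranspose_mul_self M)).trace).re

/-- Positive semidefinite square root (junk value `0` off the PSD matrices). -/
noncomputable def msqrt (A : Matrix n n ℂ) : Matrix n n ℂ :=
  @dite _ A.PosSemidef (Classical.propDecidable _) (fun h => posSemidefSqrt h) (fun _ => 0)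

noncomputable def Matrix.PosSemidef.sqrt {A : Matrix n n ℂ} (hA : A.PosSemidef) : Matrix n n ℂ :=
  posSemidefSqrt hA

/-- Fidelity `F(ρ,σ) = ‖√ρ √σ‖₁²`. -/
noncomputable def fidelity (ρ σ : Matrix n n ℂ) : ℝ :=
  (traceNorm (msqrt ρ * msqrt σ)) ^ 2

/-- A density operator: positive semidefinite with unit trace. -/
def IsDensity (ρ : Matrix n n ℂ) : Prop := ρ.PosSemidef ∧ ρ.trace = 1

/-- The Löwner partial order `A ⪯ B`. -/
def Loewner (A B : Matrix n n ℂ) : Prop := (B - A).PosSemidef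

/-- `supp ρ ⊆ supp σ`, expressed for PSD matrices as `ker σ ⊆ ker ρ`. -/
def SuppSubset (ρ σ : Matrix n n ℂ) : Prop := ∀ v, σ *ᵥ v = 0 → ρ *ᵥ v = 0

/-- Observational divergence `D(ρ‖σ)`. -/
noncomputable def obsDiv (ρ σ : Matrix n n ℂ) : ℝ :=
  sSup { x | ∃ M : Matrix n n ℂ, M.PosSemidef ∧ (1 - M).PosSemidef ∧
    (M * σ).trace ≠ 0 ∧
    x = ((M * ρ).trace).re * Real.logb 2 (((M * ρ).trace).re / ((M * σ).trace).re) }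

section W11Section
variable {m : Type*} [Fintype m]

namespace W11


/-- trace of PSD matrix is nonneg (in ℂ with ComplexOrder). -/
lemma psd_trace_nonneg {A : Matrix n n ℂ} (hA : A.PosSemidef) : 0 ≤ A.trace := by
  rw [Matrix.trace]
  apply Finset.sum_nonneg
  intro i _
  exact hA.diag_nonneg

lemma psd_trace_re_nonneg {A : Matrix n n ℂ} (hA : A.PosSemidef) : 0 ≤ A.trace.re :=
  (Complex.le_def.mp (psd_trace_nonneg hA)).1

lemma psd_trace_im_zero {A : Matrix n n ℂ} (hA : A.PosSemidef) : A.trace.im = 0 :=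
  ((Complex.le_def.mp (psd_trace_nonneg hA)).2).symm

lemma trace_re_mono {A B : Matrix n n ℂ} (h : (B - A).PosSemidef) :
    A.trace.re ≤ B.trace.re := by
  have := psd_trace_re_nonneg h
  rw [Matrix.trace_sub, Complex.sub_re] at this
  linarith



lemma trace_conjTranspose_mul {G H : Matrix m n ℂ} :
    (Gᴴ * H).trace = ∑ p : m × n, (starRingEnd ℂ) (G p.1 p.2) * H p.1 p.2 := by
  rw [Matrix.trace]
  simp only [Matrix.diag, Matrix.mul_apply, Matrix.conjTranspose_apply]
  rw [← Finset.sum_product']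
  rw [show (Finset.univ ×ˢ Finset.univ : Finset (n × m)) = Finset.univ from rfl]
  exact Fintype.sum_equiv (Equiv.prodComm n m) _ _ (fun p => rfl)

lemma trace_conjTranspose_mul_self_re {G : Matrix m n ℂ} :
    (Gᴴ * G).trace.re = ∑ p : m × n, Complex.normSq (G p.1 p.2) := by
  rw [trace_conjTranspose_mul, Complex.re_sum]
  congr 1; ext p
  rw [mul_comm, Complex.mul_conj]
  simp

/-- Cauchy–Schwarz for the Frobenius inner product. -/
lemma cs_trace (G H : Matrix m n ℂ) :
    ‖(Gᴴ * H).trace‖ ≤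
      Real.sqrt ((Gᴴ * G).trace.re) * Real.sqrt ((Hᴴ * H).trace.re) := by
  let x : EuclideanSpace ℂ (m × n) := WithLp.toLp 2 (fun p : m × n => G p.1 p.2)
  let y : EuclideanSpace ℂ (m × n) := WithLp.toLp 2 (fun p : m × n => H p.1 p.2)
  have hinner : (Gᴴ * H).trace = inner (𝕜 := ℂ) x y := by
    rw [trace_conjTranspose_mul, PiLp.inner_apply]
    simp [RCLike.inner_apply, x, y]
    exact Finset.sum_congr rfl fun _ _ => mul_comm _ _
  have hx : Real.sqrt ((Gᴴ * G).trace.re) = ‖x‖ := by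
    rw [trace_conjTranspose_mul_self_re, EuclideanSpace.norm_eq]
    congr 1
    apply Finset.sum_congr rfl
    intro p _
    rw [← Complex.sq_norm]
  have hy : Real.sqrt ((Hᴴ * H).trace.re) = ‖y‖ := by
    rw [trace_conjTranspose_mul_self_re, EuclideanSpace.norm_eq]
    congr 1
    apply Finset.sum_congr rfl
    intro p _
    rw [← Complex.sq_norm]
  rw [hinner, hx, hy]
  exact norm_inner_le_norm (𝕜 := ℂ) x y



noncomputable section
variable {A : Matrix n n ℂ} (hA : A.PosSemidef)

/-- diag conjugated by the eigenvector unitary -/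
def cdiag (hA : A.PosSemidef) (f : n → ℂ) : Matrix n n ℂ :=
  hA.1.eigenvectorUnitary.1 * diagonal f * (star hA.1.eigenvectorUnitary.1 : Matrix n n ℂ)

lemma cdiag_mul (f g : n → ℂ) : cdiag hA f * cdiag hA g = cdiag hA (f * g) := by
  unfold cdiag
  have h1 : (star hA.1.eigenvectorUnitary.1 : Matrix n n ℂ) * hA.1.eigenvectorUnitary.1 = 1 :=
    Unitary.coe_star_mul_self hA.1.eigenvectorUnitary
  calc hA.1.eigenvectorUnitary.1 * diagonal f * (star hA.1.eigenvectorUnitary.1) *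
      (hA.1.eigenvectorUnitary.1 * diagonal g * (star hA.1.eigenvectorUnitary.1))
      = hA.1.eigenvectorUnitary.1 * diagonal f *
        ((star hA.1.eigenvectorUnitary.1) * hA.1.eigenvectorUnitary.1) *
        diagonal g * (star hA.1.eigenvectorUnitary.1) := by
        simp only [Matrix.mul_assoc]
    _ = _ := by
        rw [h1]
        simp only [Matrix.mul_one, Matrix.mul_assoc, diagonal_mul_diagonal]
        rfl

lemma cdiag_conjTranspose (f : n → ℂ) : (cdiag hA f)ᴴ = cdiag hA (star f) := by
  unfold cdiag
  simp only [conjTranspose_mul, Matrix.star_eq_conjTranspose, conjTranspose_conjTranspose,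
    diagonal_conjTranspose, Matrix.mul_assoc]

lemma sqrt_eq_cdiag : hA.sqrt = cdiag hA (fun i => ((hA.1.eigenvalues i).sqrt : ℂ)) := by
  rfl

lemma A_eq_cdiag : A = cdiag hA (fun i => ((hA.1.eigenvalues i : ℝ) : ℂ)) := by
  conv_lhs => rw [hA.1.spectral_theorem]
  rfl

lemma _root_.Matrix.PosSemidef.posSemidef_sqrt : hA.sqrt.PosSemidef := by
  rw [sqrt_eq_cdiag]
  unfold cdiag
  have hd := Matrix.PosSemidef.diagonal (R := ℂ) (d := fun i => ((hA.1.eigenvalues i).sqrt : ℂ))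
    (fun i => Complex.zero_le_real.mpr (Real.sqrt_nonneg _))
  exact hd.mul_mul_conjTranspose_same hA.1.eigenvectorUnitary.1

lemma _root_.Matrix.PosSemidef.sqrt_mul_self : hA.sqrt * hA.sqrt = A := by
  rw [sqrt_eq_cdiag, cdiag_mul]
  refine (congrArg (cdiag hA) (funext fun i => ?_)).trans (A_eq_cdiag hA).symm
  simp only [Pi.mul_apply]
  rw [← Complex.ofReal_mul, Real.mul_self_sqrt (hA.eigenvalues_nonneg i)]

/-- spectral projection onto the support -/
def sproj (hA : A.PosSemidef) : Matrix n n ℂ :=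
  cdiag hA (fun i => if hA.1.eigenvalues i = 0 then 0 else 1)

/-- pseudo-inverse of the square root -/
def spinv (hA : A.PosSemidef) : Matrix n n ℂ :=
  cdiag hA (fun i => if hA.1.eigenvalues i = 0 then 0 else (((hA.1.eigenvalues i).sqrt : ℂ))⁻¹)

lemma sqrt_ne_zero {x : ℝ} (hx : 0 ≤ x) (h : x ≠ 0) : (Real.sqrt x : ℂ) ≠ 0 := by
  simp only [ne_eq, Complex.ofReal_eq_zero]
  intro hc
  exact h (le_antisymm (by nlinarith [Real.sq_sqrt hx, Real.sqrt_nonneg x]) hx)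

lemma cdiag_congr {f g : n → ℂ} (h : ∀ i, f i = g i) : cdiag hA f = cdiag hA g := by
  have : f = g := funext h
  rw [this]

lemma spinv_mul_sqrt : spinv hA * hA.sqrt = sproj hA := by
  rw [spinv, sqrt_eq_cdiag, cdiag_mul, sproj]
  apply cdiag_congr
  intro i
  simp only [Pi.mul_apply]
  by_cases h : hA.1.eigenvalues i = 0
  · simp [h]
  · rw [if_neg h, if_neg h]
    exact inv_mul_cancel₀ (sqrt_ne_zero (hA.eigenvalues_nonneg i) h)

lemma sqrt_mul_spinv : hA.sqrt * spinv hA = sproj hA := by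
  rw [spinv, sqrt_eq_cdiag, cdiag_mul, sproj]
  apply cdiag_congr
  intro i
  simp only [Pi.mul_apply]
  by_cases h : hA.1.eigenvalues i = 0
  · simp [h]
  · rw [if_neg h, if_neg h]
    exact mul_inv_cancel₀ (sqrt_ne_zero (hA.eigenvalues_nonneg i) h)

lemma sproj_mul_sqrt : sproj hA * hA.sqrt = hA.sqrt := by
  rw [sqrt_eq_cdiag, sproj, cdiag_mul]
  apply cdiag_congr
  intro i
  simp only [Pi.mul_apply]
  by_cases h : hA.1.eigenvalues i = 0
  · simp [h]
  · simp [h]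

lemma sqrt_mul_sproj : hA.sqrt * sproj hA = hA.sqrt := by
  rw [sqrt_eq_cdiag, sproj, cdiag_mul]
  apply cdiag_congr
  intro i
  simp only [Pi.mul_apply]
  by_cases h : hA.1.eigenvalues i = 0
  · simp [h]
  · simp [h]

lemma sproj_mul_sproj : sproj hA * sproj hA = sproj hA := by
  rw [sproj, cdiag_mul]
  apply cdiag_congr
  intro i
  simp only [Pi.mul_apply]
  by_cases h : hA.1.eigenvalues i = 0 <;> simp [h]

lemma spinv_mul_sproj : spinv hA * sproj hA = spinv hA := by
  rw [spinv, sproj, cdiag_mul]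
  apply cdiag_congr
  intro i
  simp only [Pi.mul_apply]
  by_cases h : hA.1.eigenvalues i = 0 <;> simp [h]

lemma sproj_conjTranspose : (sproj hA)ᴴ = sproj hA := by
  rw [sproj, cdiag_conjTranspose]
  apply cdiag_congr
  intro i
  simp only [Pi.star_apply]
  by_cases h : hA.1.eigenvalues i = 0 <;> simp [h]

lemma spinv_conjTranspose : (spinv hA)ᴴ = spinv hA := by
  rw [spinv, cdiag_conjTranspose]
  apply cdiag_congr
  intro i
  simp only [Pi.star_apply]
  by_cases h : hA.1.eigenvalues i = 0
  · simp [h]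
  · rw [if_neg h, star_inv₀]
    congr 1
    exact Complex.conj_ofReal _

lemma spinv_mul_A_mul_spinv : spinv hA * A * spinv hA = sproj hA := by
  have key : spinv hA * (hA.sqrt * hA.sqrt) * spinv hA = sproj hA := by
    calc spinv hA * (hA.sqrt * hA.sqrt) * spinv hA
        = (spinv hA * hA.sqrt) * (hA.sqrt * spinv hA) := by simp only [Matrix.mul_assoc]
      _ = sproj hA * sproj hA := by rw [spinv_mul_sqrt, sqrt_mul_spinv]
      _ = sproj hA := sproj_mul_sproj hA
  rw [hA.sqrt_mul_self] at key
  exact key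

/-- Any `B` with `Bᴴ * B = A` is unchanged by the support projection of `A`. -/
lemma mul_sproj_of {B : Matrix m n ℂ} (hBA : Bᴴ * B = A) : B * sproj hA = B := by
  have key : (B * (1 - sproj hA))ᴴ * (B * (1 - sproj hA)) = 0 := by
    have h1 : (1 - sproj hA)ᴴ = 1 - sproj hA := by
      rw [conjTranspose_sub, conjTranspose_one, sproj_conjTranspose]
    have h2 : (1 - sproj hA) * (Bᴴ * B) * (1 - sproj hA) = 0 := by
      rw [hBA]
      have h3 : (1 - sproj hA) * A = 0 := by
        have h4 : (1 - sproj hA) * (hA.sqrt * hA.sqrt) = 0 := by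
          rw [← Matrix.mul_assoc, Matrix.sub_mul, Matrix.one_mul, sproj_mul_sqrt,
            sub_self, Matrix.zero_mul]
        rwa [hA.sqrt_mul_self] at h4
      rw [h3, Matrix.zero_mul]
    calc (B * (1 - sproj hA))ᴴ * (B * (1 - sproj hA))
        = (1 - sproj hA) * (Bᴴ * B) * (1 - sproj hA) := by
          rw [conjTranspose_mul, h1]; simp only [Matrix.mul_assoc]
      _ = 0 := h2
  have h0 : B * (1 - sproj hA) = 0 := Matrix.conjTranspose_mul_self_eq_zero.mp key
  rw [Matrix.mul_sub, Matrix.mul_one, sub_eq_zero] at h0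
  exact h0.symm

end

section KeyLemma
variable {n : Type*} [Fintype n] [DecidableEq n]

/-- If `1 - KᴴK ⪰ 0` then `Re Tr (K B) ≤ Tr √(BᴴB)`. -/
lemma trace_mul_le (B K : Matrix n n ℂ) (hK : (1 - Kᴴ * K).PosSemidef) :
    ((K * B).trace).re ≤ ((Matrix.posSemidef_conjTranspose_mul_self B).sqrt.trace).re := by
  set hH := Matrix.posSemidef_conjTranspose_mul_self B with hHdef
  set Q := hH.sqrt with hQdef
  have hQ : Q.PosSemidef := hH.posSemidef_sqrt
  set R := hQ.sqrt with hRdef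
  have hRR : R * R = Q := hQ.sqrt_mul_self
  have hRH : Rᴴ = R := hQ.posSemidef_sqrt.1
  set W : Matrix n n ℂ := B * spinv hH with hWdef
  have hWQ : W * Q = B := by
    rw [hWdef, Matrix.mul_assoc, spinv_mul_sqrt, mul_sproj_of hH rfl]
  have hWW : Wᴴ * W = sproj hH := by
    rw [hWdef, conjTranspose_mul, spinv_conjTranspose]
    calc spinv hH * Bᴴ * (B * spinv hH) = spinv hH * (Bᴴ * B) * spinv hH := by
          simp only [Matrix.mul_assoc]
      _ = sproj hH := spinv_mul_A_mul_spinv hH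
  set T : Matrix n n ℂ := W * R with hTdef
  have hTT : (Tᴴ * T).trace = Q.trace := by
    have h1 : Tᴴ * T = Rᴴ * sproj hH * R := by
      rw [hTdef, conjTranspose_mul]
      calc Rᴴ * Wᴴ * (W * R) = Rᴴ * (Wᴴ * W) * R := by simp only [Matrix.mul_assoc]
        _ = Rᴴ * sproj hH * R := by rw [hWW]
    rw [h1, Matrix.trace_mul_comm (Rᴴ * sproj hH) R, ← Matrix.mul_assoc, hRH, hRR,
      sqrt_mul_sproj]
  set Hm : Matrix n n ℂ := K * T with hHmdef
  have htr : (K * B).trace = (Rᴴ * Hm).trace := by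
    rw [hHmdef, hTdef]
    have : K * B = K * W * (R * R) := by rw [hRR, Matrix.mul_assoc, hWQ]
    rw [this, hRH]
    rw [show K * W * (R * R) = (K * (W * R)) * R by simp only [Matrix.mul_assoc]]
    rw [Matrix.trace_mul_comm]
  have hHm_le : ((Hmᴴ * Hm).trace).re ≤ Q.trace.re := by
    have hdiff : Tᴴ * T - Hmᴴ * Hm = Tᴴ * (1 - Kᴴ * K) * T := by
      have h5 : Hmᴴ * Hm = Tᴴ * (Kᴴ * K) * T := by
        rw [hHmdef, conjTranspose_mul]; simp only [Matrix.mul_assoc]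
      rw [h5, Matrix.mul_sub, Matrix.sub_mul, Matrix.mul_one]
    have hpsd : (Tᴴ * T - Hmᴴ * Hm).PosSemidef := by
      rw [hdiff]; exact hK.conjTranspose_mul_mul_same T
    have := trace_re_mono hpsd
    rwa [hTT] at this
  calc ((K * B).trace).re ≤ ‖(K * B).trace‖ := Complex.re_le_norm _
    _ = ‖(Rᴴ * Hm).trace‖ := by rw [htr]
    _ ≤ Real.sqrt ((Rᴴ * R).trace.re) * Real.sqrt ((Hmᴴ * Hm).trace.re) := cs_trace R Hm
    _ ≤ Real.sqrt (Q.trace.re) * Real.sqrt (Q.trace.re) := by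
        apply mul_le_mul
        · rw [hRH, hRR]
        · exact Real.sqrt_le_sqrt hHm_le
        · exact Real.sqrt_nonneg _
        · exact Real.sqrt_nonneg _
    _ = Q.trace.re := Real.mul_self_sqrt (psd_trace_re_nonneg hQ)

end KeyLemma

section Main
variable {n : Type*} [Fintype n] [DecidableEq n]

lemma psd_one_sub_proj {P : Matrix n n ℂ} (hP : Pᴴ = P) (hPP : P * P = P) :
    (1 - P).PosSemidef := by
  have h : (1 - P)ᴴ * (1 - P) = 1 - P := by
    rw [conjTranspose_sub, conjTranspose_one, hP]
    simp only [Matrix.mul_sub, Matrix.sub_mul, Matrix.one_mul, Matrix.mul_one, hPP]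
    abel
  rw [← h]
  exact Matrix.posSemidef_conjTranspose_mul_self _

/-- Achievability: an optimal `X` for the Watrous SDP. -/
lemma exists_opt (ρ ρ' : Matrix n n ℂ) (hρ : ρ.PosSemidef) (hρ' : ρ'.PosSemidef) :
    ∃ X : Matrix n n ℂ, (Matrix.fromBlocks ρ' X Xᴴ ρ).PosSemidef ∧
      X.trace = ((Matrix.posSemidef_conjTranspose_mul_self (hρ.sqrt * hρ'.sqrt)).sqrt).trace := by
  set S := hρ.sqrt with hSdef
  set S' := hρ'.sqrt with hS'def
  set B : Matrix n n ℂ := S * S' with hBdef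
  set hH := Matrix.posSemidef_conjTranspose_mul_self B with hHdef
  set Q := hH.sqrt with hQdef
  set W : Matrix n n ℂ := B * spinv hH with hWdef
  have hSh : Sᴴ = S := hρ.posSemidef_sqrt.1
  have hS'h : S'ᴴ = S' := hρ'.posSemidef_sqrt.1
  have hWB : Wᴴ * B = Q := by
    have h1 : Wᴴ = spinv hH * Bᴴ := by
      rw [hWdef, conjTranspose_mul, spinv_conjTranspose]
    have h2 : spinv hH * (hH.sqrt * hH.sqrt) = Q := by
      rw [← Matrix.mul_assoc, spinv_mul_sqrt, sproj_mul_sqrt]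
    rw [hH.sqrt_mul_self] at h2
    rw [h1, Matrix.mul_assoc, h2]
  have hWW : Wᴴ * W = sproj hH := by
    rw [hWdef, conjTranspose_mul, spinv_conjTranspose]
    calc spinv hH * Bᴴ * (B * spinv hH) = spinv hH * (Bᴴ * B) * spinv hH := by
          simp only [Matrix.mul_assoc]
      _ = sproj hH := spinv_mul_A_mul_spinv hH
  have hWproj : W * sproj hH = W := by
    rw [hWdef, Matrix.mul_assoc, spinv_mul_sproj]
  have hPh : (W * Wᴴ)ᴴ = W * Wᴴ := by
    rw [conjTranspose_mul, conjTranspose_conjTranspose]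
  have hPP : (W * Wᴴ) * (W * Wᴴ) = W * Wᴴ := by
    calc (W * Wᴴ) * (W * Wᴴ) = W * (Wᴴ * W) * Wᴴ := by simp only [Matrix.mul_assoc]
      _ = W * Wᴴ := by rw [hWW, hWproj]
  set D : Matrix n n ℂ := Wᴴ * S with hDdef
  have hDD : Dᴴ * D = S * (W * Wᴴ) * S := by
    rw [hDdef, conjTranspose_mul, conjTranspose_conjTranspose, hSh]
    simp only [Matrix.mul_assoc]
  have hRem : (ρ - Dᴴ * D).PosSemidef := by
    have h1 : ρ - Dᴴ * D = Sᴴ * (1 - W * Wᴴ) * S := by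
      rw [Matrix.mul_sub, Matrix.sub_mul, Matrix.mul_one, hSh, hρ.sqrt_mul_self, hDD]
    rw [h1]
    exact (psd_one_sub_proj hPh hPP).conjTranspose_mul_mul_same S
  set F := hRem.sqrt with hFdef
  have hFh : Fᴴ = F := hRem.posSemidef_sqrt.1
  have hFF : Fᴴ * F = ρ - Dᴴ * D := by rw [hFh, hRem.sqrt_mul_self]
  refine ⟨S' * D, ?_, ?_⟩
  · have hN : (Matrix.fromBlocks S' D 0 F)ᴴ * (Matrix.fromBlocks S' D 0 F) =
        Matrix.fromBlocks ρ' (S' * D) (S' * D)ᴴ ρ := by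
      have e11 : S'ᴴ * S' + (0 : Matrix n n ℂ)ᴴ * (0 : Matrix n n ℂ) = ρ' := by
        rw [hS'h, hρ'.sqrt_mul_self, Matrix.conjTranspose_zero, Matrix.zero_mul, add_zero]
      have e12 : S'ᴴ * D + (0 : Matrix n n ℂ)ᴴ * F = S' * D := by
        rw [hS'h, Matrix.conjTranspose_zero, Matrix.zero_mul, add_zero]
      have e21 : Dᴴ * S' + Fᴴ * (0 : Matrix n n ℂ) = (S' * D)ᴴ := by
        rw [Matrix.mul_zero, add_zero, conjTranspose_mul S' D, hS'h]
      have e22 : Dᴴ * D + Fᴴ * F = ρ := by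
        rw [hFF]; abel
      rw [Matrix.fromBlocks_conjTranspose, Matrix.fromBlocks_multiply, e11, e12, e21, e22]
    rw [← hN]
    exact Matrix.posSemidef_conjTranspose_mul_self _
  · have h1 : (S' * D).trace = (D * S').trace := Matrix.trace_mul_comm _ _
    have h2 : D * S' = Wᴴ * B := by
      rw [hDdef, hBdef]; simp only [Matrix.mul_assoc]
    rw [h1, h2, hWB]

/-- The SDP upper bound. -/
lemma upper_bound (ρ ρ' X : Matrix n n ℂ) (hρ : ρ.PosSemidef) (hρ' : ρ'.PosSemidef)
    (hM : (Matrix.fromBlocks ρ' X Xᴴ ρ).PosSemidef) :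
    (X.trace).re ≤
      ((Matrix.posSemidef_conjTranspose_mul_self (hρ.sqrt * hρ'.sqrt)).sqrt).trace.re := by
  set S := hρ.sqrt with hSdef
  set S' := hρ'.sqrt with hS'def
  have hSh : Sᴴ = S := hρ.posSemidef_sqrt.1
  have hS'h : S'ᴴ = S' := hρ'.posSemidef_sqrt.1
  set N := hM.sqrt with hNdef
  have hNN : Nᴴ * N = Matrix.fromBlocks ρ' X Xᴴ ρ := by
    rw [hM.posSemidef_sqrt.1, hM.sqrt_mul_self]
  set B₁ : Matrix (n ⊕ n) n ℂ := Matrix.of (fun i j => N i (Sum.inl j)) with hB1def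
  set B₂ : Matrix (n ⊕ n) n ℂ := Matrix.of (fun i j => N i (Sum.inr j)) with hB2def
  have hB1 : B₁ᴴ * B₁ = ρ' := by
    ext j k
    have h := congrFun (congrFun hNN (Sum.inl j)) (Sum.inl k)
    simp only [Matrix.mul_apply, Matrix.conjTranspose_apply, Matrix.fromBlocks_apply₁₁] at h ⊢
    exact h
  have hB2 : B₂ᴴ * B₂ = ρ := by
    ext j k
    have h := congrFun (congrFun hNN (Sum.inr j)) (Sum.inr k)
    simp only [Matrix.mul_apply, Matrix.conjTranspose_apply, Matrix.fromBlocks_apply₂₂] at h ⊢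
    exact h
  have hB12 : B₁ᴴ * B₂ = X := by
    ext j k
    have h := congrFun (congrFun hNN (Sum.inl j)) (Sum.inr k)
    simp only [Matrix.mul_apply, Matrix.conjTranspose_apply, Matrix.fromBlocks_apply₁₂] at h ⊢
    exact h
  set W₁ : Matrix (n ⊕ n) n ℂ := B₁ * spinv hρ' with hW1def
  set W₂ : Matrix (n ⊕ n) n ℂ := B₂ * spinv hρ with hW2def
  have hW1S : W₁ * S' = B₁ := by
    rw [hW1def, Matrix.mul_assoc, spinv_mul_sqrt, mul_sproj_of hρ' hB1]
  have hW2S : W₂ * S = B₂ := by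
    rw [hW2def, Matrix.mul_assoc, spinv_mul_sqrt, mul_sproj_of hρ hB2]
  have hW1W1 : W₁ᴴ * W₁ = sproj hρ' := by
    rw [hW1def, conjTranspose_mul, spinv_conjTranspose]
    calc spinv hρ' * B₁ᴴ * (B₁ * spinv hρ') = spinv hρ' * (B₁ᴴ * B₁) * spinv hρ' := by
          simp only [Matrix.mul_assoc]
      _ = sproj hρ' := by rw [hB1]; exact spinv_mul_A_mul_spinv hρ'
  have hW2W2 : W₂ᴴ * W₂ = sproj hρ := by
    rw [hW2def, conjTranspose_mul, spinv_conjTranspose]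
    calc spinv hρ * B₂ᴴ * (B₂ * spinv hρ) = spinv hρ * (B₂ᴴ * B₂) * spinv hρ := by
          simp only [Matrix.mul_assoc]
      _ = sproj hρ := by rw [hB2]; exact spinv_mul_A_mul_spinv hρ
  have hW1proj : W₁ * sproj hρ' = W₁ := by
    rw [hW1def, Matrix.mul_assoc, spinv_mul_sproj]
  set K : Matrix n n ℂ := W₁ᴴ * W₂ with hKdef
  have hP1h : (W₁ * W₁ᴴ)ᴴ = W₁ * W₁ᴴ := by
    rw [conjTranspose_mul, conjTranspose_conjTranspose]
  have hP1P1 : (W₁ * W₁ᴴ) * (W₁ * W₁ᴴ) = W₁ * W₁ᴴ := by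
    calc (W₁ * W₁ᴴ) * (W₁ * W₁ᴴ) = W₁ * (W₁ᴴ * W₁) * W₁ᴴ := by simp only [Matrix.mul_assoc]
      _ = W₁ * W₁ᴴ := by rw [hW1W1, hW1proj]
  have hK : (1 - Kᴴ * K).PosSemidef := by
    have e1 : W₂ᴴ * (1 - W₁ * W₁ᴴ) * W₂ = sproj hρ - Kᴴ * K := by
      rw [Matrix.mul_sub, Matrix.sub_mul, Matrix.mul_one, hW2W2, hKdef]
      congr 1
      simp only [conjTranspose_mul, conjTranspose_conjTranspose, Matrix.mul_assoc]
    have e2 : 1 - Kᴴ * K = (1 - sproj hρ) + (sproj hρ - Kᴴ * K) := by abel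
    rw [e2, ← e1]
    have hproj : (1 - sproj hρ).PosSemidef :=
      psd_one_sub_proj (sproj_conjTranspose hρ) (sproj_mul_sproj hρ)
    exact hproj.add ((psd_one_sub_proj hP1h hP1P1).conjTranspose_mul_mul_same W₂)
  have hKB : (K * (S * S')).trace = X.trace := by
    have h1 : K * (S * S') = W₁ᴴ * B₂ * S' := by
      rw [hKdef]
      calc W₁ᴴ * W₂ * (S * S') = W₁ᴴ * (W₂ * S) * S' := by simp only [Matrix.mul_assoc]
        _ = W₁ᴴ * B₂ * S' := by rw [hW2S]
    rw [h1, Matrix.trace_mul_comm, ← Matrix.mul_assoc]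
    have h2 : S' * W₁ᴴ = B₁ᴴ := by
      rw [← hS'h, ← conjTranspose_mul, hW1S]
    rw [h2, hB12]
  have := trace_mul_le (S * S') K hK
  rwa [hKB] at this

end Main
end W11

end W11Section

theorem stmt11 (ρ ρ' : Matrix n n ℂ) (hρ : IsDensity ρ) (hρ' : IsDensity ρ') :
    Real.sqrt (fidelity ρ ρ') =
      sSup {x : ℝ | ∃ X : Matrix n n ℂ,
        (Matrix.fromBlocks ρ' X Xᴴ ρ).PosSemidef ∧
        x = (1/2) * ((X.trace + Xᴴ.trace).re)} := by
  obtain ⟨hρp, -⟩ := hρ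
  obtain ⟨hρ'p, -⟩ := hρ'
  set Q := (Matrix.posSemidef_conjTranspose_mul_self (hρp.sqrt * hρ'p.sqrt)).sqrt with hQdef
  have hQ : Q.PosSemidef :=
    (Matrix.posSemidef_conjTranspose_mul_self (hρp.sqrt * hρ'p.sqrt)).posSemidef_sqrt
  have htre : 0 ≤ Q.trace.re := W11.psd_trace_re_nonneg hQ
  have hms : msqrt ρ = hρp.sqrt := by unfold msqrt; exact dif_pos hρp
  have hms' : msqrt ρ' = hρ'p.sqrt := by unfold msqrt; exact dif_pos hρ'p
  have hfid : Real.sqrt (fidelity ρ ρ') = Q.trace.re := by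
    rw [fidelity, hms, hms']
    rw [Real.sqrt_sq]
    · rfl
    · exact htre
  rw [hfid]
  have hgreat : IsGreatest {x : ℝ | ∃ X : Matrix n n ℂ,
      (Matrix.fromBlocks ρ' X Xᴴ ρ).PosSemidef ∧
      x = (1/2) * ((X.trace + Xᴴ.trace).re)} (Q.trace.re) := by
    constructor
    · obtain ⟨X, hXpsd, hXtr⟩ := W11.exists_opt ρ ρ' hρp hρ'p
      refine ⟨X, hXpsd, ?_⟩
      rw [Matrix.trace_conjTranspose, Complex.add_re, RCLike.star_def, Complex.conj_re, hXtr]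
      ring
    · rintro x ⟨X, hXpsd, rfl⟩
      have hb := W11.upper_bound ρ ρ' X hρp hρ'p hXpsd
      rw [Matrix.trace_conjTranspose, Complex.add_re, RCLike.star_def, Complex.conj_re]
      rw [show (1/2 : ℝ) * (X.trace.re + X.trace.re) = X.trace.re by ring]
      exact hb
  exact hgreat.csSup_eq.symm
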